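/- Exact left double integral of the shifted Legendre scaling functions (Result 3): for all J ≥ 1, n ∈ {1, …, 2^{J−1}}, natural m, and t ∈ [0,1], the iterated integral ∫_0^t ∫_0^s φ_{n,m}^J(r) dr ds equals: 0 if t ≤ (n−1)/2^{J−1}; √((2m+1)/(2^{J−1})³) ∑_{i=0}^{m} ( c_{i,m}/((i+1)(i+2)) ) (2^{J−1} t − n + 1)^{i+2} if (n−1)/2^{J−1} < t < n/2^{J−1}; √(1/2^{J−1}) · ( (2^{J−1} t − n + 1)/2^{J−1} − 1/2^{J} ) if t ≥ n/2^{J−1} and m = 0; and √((2m+1)/2^{J−1}) · ( −(1/2^{J−1}) ∑_{i=0}^{m} c_{i,m}/(i+2) ) if t ≥ n/2^{J−1} and m ≥ 1. -/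

import Mathlib

open MeasureTheory

/-- The coefficients `c_{i,m}` of the shifted Legendre polynomials:
`c_{i,m} = (∏_{j=0}^{m−1} (1+i+j)) / (∏_{j=0, j≠i}^{m} (i−j))` (and `c_{0,0} = 1`). -/
noncomputable def legendreCoeff (m i : ℕ) : ℝ :=
  (∏ j ∈ Finset.range m, ((1 : ℝ) + i + j)) /
    (∏ j ∈ (Finset.range (m + 1)).erase i, ((i : ℝ) - j))

/-- The shifted Legendre polynomial `L_m(t) = ∑_{i=0}^{m} c_{i,m} t^i` on `[0,1]`. -/
noncomputable def shiftedLegendre (m : ℕ) (t : ℝ) : ℝ :=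
  ∑ i ∈ Finset.range (m + 1), legendreCoeff m i * t ^ i

/-- The shifted Legendre scaling function `φ_{n,m}^J` on `[0,1]`:
`φ_{n,m}^J(t) = 2^{(J−1)/2} √(2m+1) L_m(2^{J−1} t − n + 1)` on
`[(n−1)/2^{J−1}, n/2^{J−1})`, and `0` otherwise. -/
noncomputable def scalingFun (J n m : ℕ) (t : ℝ) : ℝ :=
  if ((n : ℝ) - 1) / 2 ^ (J - 1) ≤ t ∧ t < (n : ℝ) / 2 ^ (J - 1) then
    Real.sqrt (2 ^ (J - 1)) * Real.sqrt (2 * m + 1) *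
      shiftedLegendre m (2 ^ (J - 1) * t - n + 1)
  else 0

/-!
On its support `[a, b)`, `a = (n - 1) / 2^(J-1)`, `b = n / 2^(J-1)`, the scaling function is
`C · L_m(2^(J-1) r - n + 1)`, and rescaling the termwise primitives of `L_m` gives its first and
second primitives `P`, `Q` vanishing at `a`. Hence the double integral is `0` up to `a`, equals
`Q t` on `[a, b]`, and continues affinely as `Q b + (t - b) P b`. For `m ≥ 1` the slope
`P b ∝ ∫₀¹ L_m` vanishes by Rodrigues' formula: `± m! L_m = D^m (x (1 - x))^m`, and
`D^(m-1) (x (1 - x))^m` is divisible by `x (1 - x)`, so it vanishes at both endpoints.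
-/

section IndicatorIoc

open Set

variable {f P Q : ℝ → ℝ} {a b s t : ℝ}

lemma integral_indicator_Ico_eq_Ioc (u v : ℝ) :
    ∫ r in u..v, (Ico a b).indicator f r = ∫ r in u..v, (Ioc a b).indicator f r :=
  intervalIntegral.integral_congr_ae
    ((indicator_ae_eq_of_ae_eq_set Ico_ae_eq_Ioc).mono fun _ h _ => h)

lemma intervalIntegrable_indicator_Ioc (hf : Continuous f) (u v : ℝ) :
    IntervalIntegrable ((Ioc a b).indicator f) volume u v :=
  intervalIntegrable_iff.2 ((intervalIntegrable_iff.1 (hf.intervalIntegrable u v)).indicator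
    measurableSet_Ioc)

lemma integral_indicator_Ioc_of_le (ha : 0 ≤ a) (hs : s ≤ a) :
    ∫ r in (0 : ℝ)..s, (Ioc a b).indicator f r = 0 :=
  intervalIntegral.integral_zero_ae <| Filter.Eventually.of_forall fun r hr =>
    indicator_of_notMem (fun hr' => by
      rcases mem_uIoc.1 hr with h | h <;> linarith [hr'.1, h.2]) f

lemma integral_indicator_Ioc_of_mem (hf : Continuous f) (hP : ∀ x, HasDerivAt P (f x) x)
    (ha : 0 ≤ a) (hs : s ∈ Icc a b) :
    ∫ r in (0 : ℝ)..s, (Ioc a b).indicator f r = P s - P a := by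
  have hφ := intervalIntegrable_indicator_Ioc (a := a) (b := b) hf
  rw [← intervalIntegral.integral_add_adjacent_intervals (hφ 0 a) (hφ a s),
    integral_indicator_Ioc_of_le ha le_rfl, zero_add,
    ← intervalIntegral.integral_eq_sub_of_hasDerivAt (fun x _ => hP x)
      (hf.intervalIntegrable a s)]
  refine intervalIntegral.integral_congr_ae (Filter.Eventually.of_forall fun r hr => ?_)
  rw [uIoc_of_le hs.1] at hr
  exact indicator_of_mem (show r ∈ Ioc a b from ⟨hr.1, hr.2.trans hs.2⟩) f

lemma integral_indicator_Ioc_of_ge (hf : Continuous f) (hP : ∀ x, HasDerivAt P (f x) x)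
    (ha : 0 ≤ a) (hab : a ≤ b) (hs : b ≤ s) :
    ∫ r in (0 : ℝ)..s, (Ioc a b).indicator f r = P b - P a := by
  have hφ := intervalIntegrable_indicator_Ioc (a := a) (b := b) hf
  rw [← intervalIntegral.integral_add_adjacent_intervals (hφ 0 b) (hφ b s),
    integral_indicator_Ioc_of_mem hf hP ha (right_mem_Icc.2 hab), add_eq_left]
  refine intervalIntegral.integral_zero_ae (Filter.Eventually.of_forall fun r hr => ?_)
  rw [uIoc_of_le hs] at hr
  exact indicator_of_notMem (fun hr' => hr.1.not_ge hr'.2) f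

lemma continuous_primitive_indicator_Ioc (hf : Continuous f) :
    Continuous fun s => ∫ r in (0 : ℝ)..s, (Ioc a b).indicator f r :=
  intervalIntegral.continuous_primitive (intervalIntegrable_indicator_Ioc hf) 0

lemma integral_integral_indicator_Ioc_of_le (ha : 0 ≤ a) (ht : t ≤ a) :
    ∫ s in (0 : ℝ)..t, ∫ r in (0 : ℝ)..s, (Ioc a b).indicator f r = 0 :=
  intervalIntegral.integral_zero_ae <| Filter.Eventually.of_forall fun s hs =>
    integral_indicator_Ioc_of_le ha (by rcases mem_uIoc.1 hs with h | h <;> linarith [h.2])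

lemma integral_integral_indicator_Ioc_of_mem (hf : Continuous f)
    (hP : ∀ x, HasDerivAt P (f x) x) (hQ : ∀ x, HasDerivAt Q (P x) x)
    (ha : 0 ≤ a) (hPa : P a = 0) (hQa : Q a = 0) (ht : t ∈ Icc a b) :
    ∫ s in (0 : ℝ)..t, ∫ r in (0 : ℝ)..s, (Ioc a b).indicator f r = Q t := by
  have hF := (continuous_primitive_indicator_Ioc (a := a) (b := b) hf).intervalIntegrable
    (μ := volume)
  have hPc : Continuous P := continuous_iff_continuousAt.2 fun x => (hP x).continuousAt
  rw [← intervalIntegral.integral_add_adjacent_intervals (hF 0 a) (hF a t),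
    integral_integral_indicator_Ioc_of_le ha le_rfl, zero_add,
    intervalIntegral.integral_congr (g := P) fun s hs => ?_,
    intervalIntegral.integral_eq_sub_of_hasDerivAt (fun x _ => hQ x) (hPc.intervalIntegrable a t),
    hQa, sub_zero]
  rw [uIcc_of_le ht.1] at hs
  simp only [integral_indicator_Ioc_of_mem hf hP ha ⟨hs.1, hs.2.trans ht.2⟩, hPa, sub_zero]

lemma integral_integral_indicator_Ioc_of_ge (hf : Continuous f)
    (hP : ∀ x, HasDerivAt P (f x) x) (hQ : ∀ x, HasDerivAt Q (P x) x)
    (ha : 0 ≤ a) (hPa : P a = 0) (hQa : Q a = 0) (hab : a ≤ b) (ht : b ≤ t) :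
    ∫ s in (0 : ℝ)..t, ∫ r in (0 : ℝ)..s, (Ioc a b).indicator f r =
      Q b + (t - b) * P b := by
  have hF := (continuous_primitive_indicator_Ioc (a := a) (b := b) hf).intervalIntegrable
    (μ := volume)
  rw [← intervalIntegral.integral_add_adjacent_intervals (hF 0 b) (hF b t),
    integral_integral_indicator_Ioc_of_mem hf hP hQ ha hPa hQa (right_mem_Icc.2 hab),
    intervalIntegral.integral_congr (g := fun _ => P b) fun s hs => ?_,
    intervalIntegral.integral_const, smul_eq_mul]
  rw [uIcc_of_le ht] at hs
  simp only [integral_indicator_Ioc_of_ge hf hP ha hab hs.1, hPa, sub_zero]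

end IndicatorIoc

lemma hasDerivAt_div_mul_pow_succ (c : ℝ) (k : ℕ) (x : ℝ) :
    HasDerivAt (fun x => c / (k + 1) * x ^ (k + 1)) (c * x ^ k) x :=
  ((hasDerivAt_pow (k + 1) x).const_mul (c / (k + 1))).congr_deriv (by push_cast; field_simp)

lemma hasDerivAt_mul_sub_add_one (K d y : ℝ) : HasDerivAt (fun y => K * y - d + 1) K y :=
  ((((hasDerivAt_id y).const_mul K).sub_const d).add_const 1).congr_deriv (mul_one K)

lemma hasDerivAt_div_mul_comp {p p' u : ℝ → ℝ} {K : ℝ} (hK : K ≠ 0)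
    (hp : ∀ x, HasDerivAt p (p' x) x) (hu : ∀ y, HasDerivAt u K y) (c y : ℝ) :
    HasDerivAt (fun y => c / K * p (u y)) (c * p' (u y)) y :=
  (((hp (u y)).comp y (hu y)).const_mul (c / K)).congr_deriv (by field_simp)

section ShiftedLegendre

open Finset
open scoped Nat

lemma prod_range_natCast_sub_eq_factorial (i : ℕ) :
    ∏ j ∈ range i, ((i : ℝ) - j) = i ! := by
  induction i with
  | zero => simp
  | succ i ih =>
    rw [prod_range_succ', Nat.factorial_succ]
    push_cast
    simp only [add_sub_add_right_eq_sub, ih, sub_zero]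
    ring

lemma prod_Ico_natCast_sub_eq_neg_one_pow_mul_factorial (i k : ℕ) :
    ∏ j ∈ Ico (i + 1) (i + k + 1), ((i : ℝ) - j) = (-1) ^ k * k ! := by
  rw [prod_Ico_eq_prod_range, show i + k + 1 - (i + 1) = k by omega,
    ← prod_range_add_one_eq_factorial, Nat.cast_prod,
    show (-1 : ℝ) ^ k = ∏ _j ∈ range k, (-1) by simp, ← prod_mul_distrib]
  refine prod_congr rfl fun j _ => ?_
  push_cast
  ring

lemma legendreCoeff_eq_neg_one_pow_mul_coeff {m i : ℕ} (h : i ≤ m) :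
    legendreCoeff m i = (-1) ^ m * (Polynomial.shiftedLegendre m).coeff i := by
  obtain ⟨k, rfl⟩ := Nat.exists_eq_add_of_le h
  have hnum : ∏ j ∈ range (i + k), ((1 : ℝ) + i + j) = (i + k + i)! / i ! := by
    rw [eq_div_iff (by positivity), add_comm (i + k) i, ← Nat.factorial_mul_ascFactorial,
      Nat.ascFactorial_eq_prod_range]
    push_cast
    rw [mul_comm]
    congr 1
    exact prod_congr rfl fun j _ => by ring
  have hsplit : (range (i + k + 1)).erase i = range i ∪ Ico (i + 1) (i + k + 1) := by
    ext j; simp only [mem_erase, mem_range, mem_union, mem_Ico]; omega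
  have hden : ∏ j ∈ (range (i + k + 1)).erase i, ((i : ℝ) - j) = i ! * ((-1) ^ k * k !) := by
    rw [hsplit, prod_union (disjoint_left.2 fun j hj hj' => by
        simp only [mem_range, mem_Ico] at hj hj'; omega),
      prod_range_natCast_sub_eq_factorial, prod_Ico_natCast_sub_eq_neg_one_pow_mul_factorial]
  rw [legendreCoeff, hnum, hden, Polynomial.coeff_shiftedLegendre]
  push_cast
  rw [Nat.cast_choose ℝ (by omega : i ≤ i + k),
    Nat.cast_choose ℝ (by omega : i + k ≤ i + k + i)]
  simp only [add_tsub_cancel_left]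
  field_simp
  rw [← pow_add, ← pow_add, show k + (i + k) + i = 2 * (i + k) by ring, pow_mul, neg_one_sq,
    one_pow]

/-- Mathlib's `Polynomial.shiftedLegendre m` is `P_m(1 - 2x)`, whereas `shiftedLegendre m` is
`P_m(2x - 1)`. -/
lemma shiftedLegendre_eq_neg_one_pow_mul_aeval (m : ℕ) (x : ℝ) :
    shiftedLegendre m x = (-1) ^ m * Polynomial.aeval x (Polynomial.shiftedLegendre m) := by
  rw [Polynomial.aeval_eq_sum_range, Polynomial.natDegree_shiftedLegendre, shiftedLegendre,
    mul_sum]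
  refine sum_congr rfl fun i hi => ?_
  rw [legendreCoeff_eq_neg_one_pow_mul_coeff (Nat.lt_succ_iff.1 (mem_range.1 hi)), zsmul_eq_mul]
  ring

open Polynomial in
lemma integral_aeval_shiftedLegendre_eq_zero {m : ℕ} (hm : m ≠ 0) :
    ∫ x in (0 : ℝ)..1, aeval x (Polynomial.shiftedLegendre m) = 0 := by
  set D := derivative^[m - 1] ((X * (1 - X)) ^ m : ℤ[X])
  have hrod : (m ! : ℤ[X]) * Polynomial.shiftedLegendre m = derivative D := by
    rw [factorial_mul_shiftedLegendre_eq, ← Function.iterate_succ_apply' derivative,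
      Nat.succ_eq_add_one, Nat.sub_one_add_one hm, mul_pow]
  obtain ⟨q, hq⟩ : X * (1 - X) ∣ D := by
    simpa [Nat.sub_sub_self (Nat.one_le_iff_ne_zero.2 hm)] using
      pow_sub_dvd_iterate_derivative_pow (X * (1 - X) : ℤ[X]) m (m - 1)
  have hD0 : aeval (0 : ℝ) D = 0 := by simp [hq]
  have hD1 : aeval (1 : ℝ) D = 0 := by simp [hq]
  have hfac : (m ! : ℝ) ≠ 0 := by positivity
  rw [← mul_right_inj' hfac, mul_zero, ← intervalIntegral.integral_const_mul]
  calc ∫ x in (0 : ℝ)..1, (m ! : ℝ) * aeval x (Polynomial.shiftedLegendre m)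
      = ∫ x in (0 : ℝ)..1, aeval x (derivative D) := by simp [← hrod]
    _ = 0 := by
      rw [intervalIntegral.integral_eq_sub_of_hasDerivAt (fun x _ => D.hasDerivAt_aeval x)
        ((Polynomial.continuous_aeval _).intervalIntegrable _ _), hD0, hD1, sub_zero]

noncomputable def shiftedLegendrePrimitive (m : ℕ) (x : ℝ) : ℝ :=
  ∑ i ∈ range (m + 1), legendreCoeff m i / (i + 1) * x ^ (i + 1)

noncomputable def shiftedLegendreSecondPrimitive (m : ℕ) (x : ℝ) : ℝ :=
  ∑ i ∈ range (m + 1), legendreCoeff m i / ((i + 1) * (i + 2)) * x ^ (i + 2)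

lemma continuous_shiftedLegendre (m : ℕ) : Continuous (shiftedLegendre m) := by
  unfold shiftedLegendre; fun_prop

lemma hasDerivAt_shiftedLegendrePrimitive (m : ℕ) (x : ℝ) :
    HasDerivAt (shiftedLegendrePrimitive m) (shiftedLegendre m x) x :=
  HasDerivAt.fun_sum fun i _ => hasDerivAt_div_mul_pow_succ _ i x

lemma hasDerivAt_shiftedLegendreSecondPrimitive (m : ℕ) (x : ℝ) :
    HasDerivAt (shiftedLegendreSecondPrimitive m) (shiftedLegendrePrimitive m x) x := by
  have hterm (i : ℕ) (y : ℝ) : legendreCoeff m i / ((i + 1) * (i + 2)) * y ^ (i + 2) =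
      legendreCoeff m i / (i + 1) / ((i + 1 : ℕ) + 1) * y ^ (i + 1 + 1) := by
    push_cast
    field_simp
    ring
  unfold shiftedLegendreSecondPrimitive
  simp only [hterm]
  exact HasDerivAt.fun_sum fun i _ => hasDerivAt_div_mul_pow_succ _ (i + 1) x

lemma shiftedLegendrePrimitive_zero (m : ℕ) : shiftedLegendrePrimitive m 0 = 0 := by
  simp [shiftedLegendrePrimitive]

lemma shiftedLegendreSecondPrimitive_zero (m : ℕ) : shiftedLegendreSecondPrimitive m 0 = 0 := by
  simp [shiftedLegendreSecondPrimitive]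

lemma shiftedLegendrePrimitive_one_eq_zero {m : ℕ} (hm : m ≠ 0) :
    shiftedLegendrePrimitive m 1 = 0 := by
  have hFTC := intervalIntegral.integral_eq_sub_of_hasDerivAt
    (fun x _ => hasDerivAt_shiftedLegendrePrimitive m x)
    ((continuous_shiftedLegendre m).intervalIntegrable 0 1)
  simp_rw [shiftedLegendrePrimitive_zero, sub_zero, shiftedLegendre_eq_neg_one_pow_mul_aeval,
    intervalIntegral.integral_const_mul, integral_aeval_shiftedLegendre_eq_zero hm,
    mul_zero] at hFTC
  exact hFTC.symm

lemma shiftedLegendreSecondPrimitive_one (m : ℕ) :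
    shiftedLegendreSecondPrimitive m 1 =
      shiftedLegendrePrimitive m 1 - ∑ i ∈ range (m + 1), legendreCoeff m i / (i + 2) := by
  simp only [shiftedLegendreSecondPrimitive, shiftedLegendrePrimitive, one_pow, mul_one,
    ← sum_sub_distrib]
  refine sum_congr rfl fun i _ => ?_
  field_simp
  ring

end ShiftedLegendre

lemma sqrt_mul_sqrt_div_self {K : ℝ} (hK : 0 < K) (x : ℝ) : √K * √x / K = √(x / K) := by
  rw [Real.sqrt_div' x hK.le, mul_comm, mul_div_assoc, Real.sqrt_div_self', mul_one_div]

lemma sqrt_mul_sqrt_div_self_div_self {K : ℝ} (hK : 0 < K) (x : ℝ) :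
    √K * √x / K / K = √(x / K ^ 3) :=
  calc √K * √x / K / K = √(x / K) / √(K ^ 2) := by
        rw [sqrt_mul_sqrt_div_self hK, Real.sqrt_sq hK.le]
    _ = √(x / K ^ 3) := by rw [← Real.sqrt_div' _ (sq_nonneg K)]; ring_nf

section ScalingFunPrimitives

variable (J n m : ℕ)

lemma scalingFun_eq_indicator :
    scalingFun J n m = (Set.Ico (((n : ℝ) - 1) / 2 ^ (J - 1)) (n / 2 ^ (J - 1))).indicator
      fun r => √(2 ^ (J - 1)) * √(2 * m + 1) * shiftedLegendre m (2 ^ (J - 1) * r - n + 1) := by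
  funext r
  rw [Set.indicator_apply]
  rfl

noncomputable def scalingFunPrimitive (y : ℝ) : ℝ :=
  √(2 ^ (J - 1)) * √(2 * m + 1) / 2 ^ (J - 1) *
    shiftedLegendrePrimitive m (2 ^ (J - 1) * y - n + 1)

noncomputable def scalingFunSecondPrimitive (y : ℝ) : ℝ :=
  √(2 ^ (J - 1)) * √(2 * m + 1) / 2 ^ (J - 1) / 2 ^ (J - 1) *
    shiftedLegendreSecondPrimitive m (2 ^ (J - 1) * y - n + 1)

lemma hasDerivAt_scalingFunPrimitive (y : ℝ) :
    HasDerivAt (scalingFunPrimitive J n m)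
      (√(2 ^ (J - 1)) * √(2 * m + 1) * shiftedLegendre m (2 ^ (J - 1) * y - n + 1)) y :=
  hasDerivAt_div_mul_comp (by positivity) (hasDerivAt_shiftedLegendrePrimitive m)
    (hasDerivAt_mul_sub_add_one _ n) _ y

lemma hasDerivAt_scalingFunSecondPrimitive (y : ℝ) :
    HasDerivAt (scalingFunSecondPrimitive J n m) (scalingFunPrimitive J n m y) y :=
  hasDerivAt_div_mul_comp (by positivity) (hasDerivAt_shiftedLegendreSecondPrimitive m)
    (hasDerivAt_mul_sub_add_one _ n) _ y

lemma two_pow_mul_sub_add_one_left : (2 : ℝ) ^ (J - 1) * ((n - 1) / 2 ^ (J - 1)) - n + 1 = 0 := by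
  field_simp
  ring

lemma two_pow_mul_sub_add_one_right : (2 : ℝ) ^ (J - 1) * (n / 2 ^ (J - 1)) - n + 1 = 1 := by
  field_simp
  ring

lemma scalingFunPrimitive_left : scalingFunPrimitive J n m ((n - 1) / 2 ^ (J - 1)) = 0 := by
  rw [scalingFunPrimitive, two_pow_mul_sub_add_one_left, shiftedLegendrePrimitive_zero, mul_zero]

lemma scalingFunSecondPrimitive_left :
    scalingFunSecondPrimitive J n m ((n - 1) / 2 ^ (J - 1)) = 0 := by
  rw [scalingFunSecondPrimitive, two_pow_mul_sub_add_one_left, shiftedLegendreSecondPrimitive_zero,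
    mul_zero]

end ScalingFunPrimitives

theorem scalingFun_left_double_integral_general (J : ℕ) (hJ : 1 ≤ J) (n : ℕ)
    (hn : 1 ≤ n) (m : ℕ) (t : ℝ) :
    (t ≤ ((n : ℝ) - 1) / 2 ^ (J - 1) →
      (∫ s in (0:ℝ)..t, ∫ r in (0:ℝ)..s, scalingFun J n m r) = 0) ∧
    (((n : ℝ) - 1) / 2 ^ (J - 1) < t → t < (n : ℝ) / 2 ^ (J - 1) →
      (∫ s in (0:ℝ)..t, ∫ r in (0:ℝ)..s, scalingFun J n m r) =
        Real.sqrt ((2 * m + 1) / (2 ^ (J - 1) : ℝ) ^ 3) *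
          ∑ i ∈ Finset.range (m + 1),
            legendreCoeff m i / ((i + 1) * (i + 2)) *
              (2 ^ (J - 1) * t - n + 1) ^ (i + 2)) ∧
    ((n : ℝ) / 2 ^ (J - 1) ≤ t → m = 0 →
      (∫ s in (0:ℝ)..t, ∫ r in (0:ℝ)..s, scalingFun J n m r) =
        Real.sqrt (1 / 2 ^ (J - 1)) *
          ((2 ^ (J - 1) * t - n + 1) / 2 ^ (J - 1) - 1 / 2 ^ J)) ∧
    ((n : ℝ) / 2 ^ (J - 1) ≤ t → 1 ≤ m →
      (∫ s in (0:ℝ)..t, ∫ r in (0:ℝ)..s, scalingFun J n m r) =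
        Real.sqrt ((2 * m + 1) / 2 ^ (J - 1)) *
          (-(1 / 2 ^ (J - 1)) *
            ∑ i ∈ Finset.range (m + 1), legendreCoeff m i / (i + 2))) := by
  have hK : (0 : ℝ) < 2 ^ (J - 1) := by positivity
  have hf : Continuous fun r : ℝ =>
      √(2 ^ (J - 1)) * √(2 * m + 1) * shiftedLegendre m (2 ^ (J - 1) * r - n + 1) :=
    continuous_const.mul ((continuous_shiftedLegendre m).comp (by fun_prop))
  have hP := hasDerivAt_scalingFunPrimitive J n m
  have hQ := hasDerivAt_scalingFunSecondPrimitive J n m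
  have hPa := scalingFunPrimitive_left J n m
  have hQa := scalingFunSecondPrimitive_left J n m
  have ha : 0 ≤ ((n : ℝ) - 1) / 2 ^ (J - 1) := div_nonneg (by simpa using hn) hK.le
  have hab : ((n : ℝ) - 1) / 2 ^ (J - 1) ≤ n / 2 ^ (J - 1) := by gcongr; linarith
  simp only [scalingFun_eq_indicator, integral_indicator_Ico_eq_Ioc]
  refine ⟨integral_integral_indicator_Ioc_of_le ha, fun hat htb => ?_, fun hbt hm => ?_,
    fun hbt hm => ?_⟩
  · rw [integral_integral_indicator_Ioc_of_mem hf hP hQ ha hPa hQa ⟨hat.le, htb.le⟩,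
      scalingFunSecondPrimitive, sqrt_mul_sqrt_div_self_div_self hK, shiftedLegendreSecondPrimitive]
  · subst hm
    have h2J : (2 : ℝ) ^ J = 2 * 2 ^ (J - 1) := by
      rw [← _root_.pow_succ', Nat.sub_one_add_one_eq_of_pos hJ]
    rw [integral_integral_indicator_Ioc_of_ge hf hP hQ ha hPa hQa hab hbt, scalingFunPrimitive,
      scalingFunSecondPrimitive, two_pow_mul_sub_add_one_right, h2J, sqrt_mul_sqrt_div_self hK]
    norm_num [shiftedLegendrePrimitive, shiftedLegendreSecondPrimitive, legendreCoeff]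
    field_simp
    ring
  · rw [integral_integral_indicator_Ioc_of_ge hf hP hQ ha hPa hQa hab hbt, scalingFunPrimitive,
      scalingFunSecondPrimitive, two_pow_mul_sub_add_one_right, shiftedLegendreSecondPrimitive_one,
      shiftedLegendrePrimitive_one_eq_zero (Nat.one_le_iff_ne_zero.1 hm),
      sqrt_mul_sqrt_div_self hK]
    ring

/-- **Exact left double integral of the shifted Legendre scaling functions (Result 3)**:
for `J ≥ 1`, `n ∈ {1, …, 2^{J−1}}`, `m : ℕ` and `t ∈ [0,1]`, the iterated integral
`∫₀ᵗ ∫₀ˢ φ_{n,m}^J(r) dr ds` is given piecewise. -/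
theorem scalingFun_left_double_integral (J : ℕ) (hJ : 1 ≤ J) (n : ℕ)
    (hn : 1 ≤ n) (hn2 : n ≤ 2 ^ (J - 1)) (m : ℕ) (t : ℝ) (ht : t ∈ Set.Icc (0:ℝ) 1) :
    (t ≤ ((n : ℝ) - 1) / 2 ^ (J - 1) →
      (∫ s in (0:ℝ)..t, ∫ r in (0:ℝ)..s, scalingFun J n m r) = 0) ∧
    (((n : ℝ) - 1) / 2 ^ (J - 1) < t → t < (n : ℝ) / 2 ^ (J - 1) →
      (∫ s in (0:ℝ)..t, ∫ r in (0:ℝ)..s, scalingFun J n m r) =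
        Real.sqrt ((2 * m + 1) / (2 ^ (J - 1) : ℝ) ^ 3) *
          ∑ i ∈ Finset.range (m + 1),
            legendreCoeff m i / ((i + 1) * (i + 2)) *
              (2 ^ (J - 1) * t - n + 1) ^ (i + 2)) ∧
    ((n : ℝ) / 2 ^ (J - 1) ≤ t → m = 0 →
      (∫ s in (0:ℝ)..t, ∫ r in (0:ℝ)..s, scalingFun J n m r) =
        Real.sqrt (1 / 2 ^ (J - 1)) *
          ((2 ^ (J - 1) * t - n + 1) / 2 ^ (J - 1) - 1 / 2 ^ J)) ∧
    ((n : ℝ) / 2 ^ (J - 1) ≤ t → 1 ≤ m →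
      (∫ s in (0:ℝ)..t, ∫ r in (0:ℝ)..s, scalingFun J n m r) =
        Real.sqrt ((2 * m + 1) / 2 ^ (J - 1)) *
          (-(1 / 2 ^ (J - 1)) *
            ∑ i ∈ Finset.range (m + 1), legendreCoeff m i / (i + 2))) :=
  scalingFun_left_double_integral_general J hJ n hn m t
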